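/- (The Complementation Principle is not surjectively relatively categorical) Let E be the complementation relation on Set (Fin 4): E(X,Y) := (Cmp X ∨ Cmp Y) → (X = Y ∨ (Cardinal.mk X = Cardinal.mk Y ∧ X ∩ Y = ∅ ∧ X ∪ Y = Set.univ)), where Cmp(X) holds iff there exists Y with Cardinal.mk X = Cardinal.mk Y, X ∩ Y = ∅ and X ∪ Y = Set.univ. Then there exist surjective functions ∂₁, ∂₂ : Set (Fin 4) → Fin 4, both realizing A[E], and a set X : Set (Fin 4) with X ⊆ Set.range ∂₁, such that E(X, ∂₂ '' (∂₁ ⁻¹' X)) fails. Consequently the Complementation Principle is not naturally relatively categorical. -/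

import Mathlib

/-- `X` is a complement: there is a set equinumerous with `X`, disjoint from `X`, whose
union with `X` is the universe. -/
def Cmp {M : Type*} (X : Set M) : Prop :=
  ∃ Y : Set M, Cardinal.mk X = Cardinal.mk Y ∧ X ∩ Y = ∅ ∧ X ∪ Y = Set.univ

/-- The complementation relation. -/
def Ecmp {M : Type*} (X Y : Set M) : Prop :=
  (Cmp X ∨ Cmp Y) →
    (X = Y ∨ (Cardinal.mk X = Cardinal.mk Y ∧ X ∩ Y = ∅ ∧ X ∪ Y = Set.univ))

/-!
On `Fin 4`, `Ecmp` is an equivalence with four classes: the three complementary pairs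
`{X, Xᶜ}` of two-element sets, and the class of all other sets (none of which is `Cmp`,
so they are pairwise related vacuously). A realization is thus a bijection between these
classes and `Fin 4`, and composing one with the transposition of two labels gives another.
Under the resulting natural bijection the set `{0, 1}` of labels — the class of
non-complements and the class of `{0, 1}` — goes to `{0, 2}`, which is neither `{0, 1}`
nor its complement.
-/

open Cardinal Function

section Complementation

variable {M : Type*}

theorem equinumerous_compl_iff {X Y : Set M} :
    (#X = #Y ∧ X ∩ Y = ∅ ∧ X ∪ Y = Set.univ) ↔ Y = Xᶜ ∧ #X = #↥Xᶜ := by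
  have hcompl : X ∩ Y = ∅ ∧ X ∪ Y = Set.univ ↔ Xᶜ = Y := by
    rw [compl_eq_iff_isCompl, isCompl_iff, Set.disjoint_iff_inter_eq_empty, codisjoint_iff]
    rfl
  rw [hcompl, eq_comm (a := Xᶜ)]
  constructor
  · rintro ⟨hcard, rfl⟩
    exact ⟨rfl, hcard⟩
  · rintro ⟨rfl, hcard⟩
    exact ⟨hcard, rfl⟩

theorem cmp_iff_mk_compl (X : Set M) : Cmp X ↔ #X = #↥Xᶜ := by
  simp only [Cmp, equinumerous_compl_iff, exists_eq_left]

theorem not_ecmp_of_cmp {X Z : Set M} (hX : Cmp X) {a b : M} (ha : a ∈ X ∩ Z)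
    (hb : b ∈ Z \ X) : ¬ Ecmp X Z := by
  intro hE
  rcases hE (Or.inl hX) with rfl | hXZ
  · exact hb.2 hb.1
  · rw [equinumerous_compl_iff] at hXZ
    exact (hXZ.1 ▸ ha.2) ha.1

variable [Fintype M] [DecidableEq M]

theorem cmp_coe_iff (s : Finset M) : Cmp (s : Set M) ↔ s.card = sᶜ.card := by
  rw [cmp_iff_mk_compl, ← Finset.coe_compl, Finset.coe_sort_coe, Finset.coe_sort_coe,
    mk_coe_finset, mk_coe_finset, Nat.cast_inj]

theorem ecmp_coe_iff (s t : Finset M) :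
    Ecmp (s : Set M) t ↔
      (s.card = sᶜ.card ∨ t.card = tᶜ.card → s = t ∨ t = sᶜ ∧ s.card = sᶜ.card) := by
  rw [Ecmp, equinumerous_compl_iff, ← cmp_iff_mk_compl, ← Finset.coe_compl, Finset.coe_inj,
    Finset.coe_inj, cmp_coe_iff, cmp_coe_iff]

end Complementation

section Realization

variable {M N P : Type*}

def Realizes (d : Set M → N) (E : Set M → Set M → Prop) : Prop :=
  ∀ X Y, d X = d Y ↔ E X Y

theorem Realizes.comp_injective {d : Set M → N} {E : Set M → Set M → Prop} (hd : Realizes d E)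
    {σ : N → P} (hσ : Injective σ) : Realizes (σ ∘ d) E :=
  fun X Y => hσ.eq_iff.trans (hd X Y)

open Classical in
theorem realizes_comp_toFinset [Fintype M] {f : Finset M → N} {E : Set M → Set M → Prop}
    (hf : ∀ s t : Finset M, f s = f t ↔ E s t) : Realizes (fun X => f X.toFinset) E := by
  intro X Y
  rw [hf, Set.coe_toFinset, Set.coe_toFinset]

end Realization

/-- Each complementary pair of two-element sets is labelled by the partner of `0` in it. -/
def pairLabel : Finset (Fin 4) → Fin 4 := fun s =>
  if s = {0, 1} ∨ s = {2, 3} then 1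
  else if s = {0, 2} ∨ s = {1, 3} then 2
  else if s = {0, 3} ∨ s = {1, 2} then 3
  else 0

theorem pairLabel_eq_iff (s t : Finset (Fin 4)) :
    pairLabel s = pairLabel t ↔ Ecmp (s : Set (Fin 4)) t := by
  rw [ecmp_coe_iff]
  revert s t
  decide

theorem pairLabel_surjective : Surjective pairLabel := by
  decide

open Classical in
noncomputable def pairLabelSet (X : Set (Fin 4)) : Fin 4 :=
  pairLabel X.toFinset

theorem realizes_pairLabelSet : Realizes pairLabelSet Ecmp :=
  realizes_comp_toFinset pairLabel_eq_iff

theorem pairLabelSet_surjective : Surjective pairLabelSet :=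
  pairLabel_surjective.comp fun s => ⟨s, by simp⟩

theorem pairLabelSet_empty : pairLabelSet ∅ = 0 := by
  simp only [pairLabelSet, Set.toFinset_empty]
  decide

theorem pairLabelSet_pair : pairLabelSet {0, 1} = 1 := by
  simp only [pairLabelSet, Set.toFinset_insert, Set.toFinset_singleton]
  decide

theorem cmp_pair : Cmp ({0, 1} : Set (Fin 4)) := by
  simpa using (cmp_coe_iff ({0, 1} : Finset (Fin 4))).2 (by decide)

/-- The Complementation Principle is not surjectively relatively categorical (hence not
naturally relatively categorical): on a domain of size 4 there are two surjective
realizations and a set `X ⊆ Set.range ∂₁` such that `E(X, ∂₂ '' (∂₁ ⁻¹' X))` fails. -/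
theorem complementation_not_surjectivelyRelativelyCategorical :
    ∃ d₁ d₂ : Set (Fin 4) → Fin 4,
      Function.Surjective d₁ ∧ Function.Surjective d₂ ∧
      (∀ X Y : Set (Fin 4), d₁ X = d₁ Y ↔ Ecmp X Y) ∧
      (∀ X Y : Set (Fin 4), d₂ X = d₂ Y ↔ Ecmp X Y) ∧
      ∃ X : Set (Fin 4), X ⊆ Set.range d₁ ∧ ¬ Ecmp X (d₂ '' (d₁ ⁻¹' X)) := by
  let σ := Equiv.swap (1 : Fin 4) 2
  refine ⟨pairLabelSet, σ ∘ pairLabelSet, pairLabelSet_surjective,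
    σ.surjective.comp pairLabelSet_surjective, realizes_pairLabelSet,
    realizes_pairLabelSet.comp_injective σ.injective, {0, 1},
    pairLabelSet_surjective.range_eq ▸ Set.subset_univ _, ?_⟩
  have h0 : (0 : Fin 4) ∈ σ ∘ pairLabelSet '' (pairLabelSet ⁻¹' {0, 1}) :=
    ⟨∅, by simp [pairLabelSet_empty],
      by simp [σ, pairLabelSet_empty, Equiv.swap_apply_of_ne_of_ne]⟩
  have h2 : (2 : Fin 4) ∈ σ ∘ pairLabelSet '' (pairLabelSet ⁻¹' {0, 1}) :=
    ⟨{0, 1}, by simp [pairLabelSet_pair], by simp [σ, pairLabelSet_pair]⟩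
  exact not_ecmp_of_cmp cmp_pair ⟨by simp, h0⟩ ⟨h2, by decide⟩
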